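/- Let f be a holomorphic generator on 𝔻 with Denjoy–Wolff point a ∈ closure(𝔻), i.e. f(z) = (z − a)(1 − conj(a)·z)·p(z) with p holomorphic and Re p ≥ 0 on 𝔻. Suppose ζ_1, …, ζ_N are pairwise distinct points of ∂𝔻 \ {a} which are boundary regular null points of f with f'(ζ_n) = ∠lim_{z→ζ_n} f(z)/(z − ζ_n) < 0 real. Then there exist a real number r ≥ 0, Möbius (fractional linear) transformations R_1, …, R_N each mapping 𝔻 biholomorphically onto the open right half-plane {w ∈ ℂ : Re w > 0} and whose continuous extension to the closed disk satisfies R_n(ζ_n) = 0, and a holomorphic function q on 𝔻 with Re q ≥ 0, such that, setting g_n(z) = (z − a)(1 − conj(a)·z)·R_n(z) and h(z) = (z − a)(1 − conj(a)·z)·q(z) (also holomorphic generators with Denjoy–Wolff point a), one has 1/f(z) = Σ_{n=1}^{N} 1/g_n(z) + r/h(z) for all z ∈ 𝔻 at which f, all g_n, and h are nonzero. -/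

import Mathlib

/-!
Write `f = c · p` with `c z = (z - a) (1 - conj a · z)`. Near `ζₙ` the factor `c` tends to
`ζₙ |ζₙ - a|²`, so the angular derivative `mₙ < 0` of `f` says that `P = 1 / p`, a holomorphic
map into the closed right half-plane, satisfies `(1 - r) P (r ζₙ) → 2 σₙ` with
`σₙ = -|ζₙ - a|² / (2 mₙ) > 0`. Letting `w = r ζ → ζ` in the Schwarz–Pick inequality gives
Julia's lemma in the form `Re P ≥ σ Re K(ζ, ·)`, where `K(ζ, z) = (ζ + z) / (ζ - z)` is the
Herglotz kernel. Along the radius to `ζₙ` the kernels at the other points are negligible, so the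
points can be peeled off one at a time: `Q = P - ∑ σₙ K(ζₙ, ·)` still has `Re Q ≥ 0`. Finally
`1 / Rₙ = σₙ K(ζₙ, ·)` for a Möbius map `Rₙ` of the disk onto the half-plane, and `Q = r / q`
with `r ∈ {0, 1}`.
-/

open Complex Filter Metric Finset

noncomputable section

/-- The Stolz angle at a boundary point `ζ` with opening parameter `M`. -/
def StolzAngle (ζ : ℂ) (M : ℝ) : Set ℂ :=
  {z : ℂ | ‖z‖ < 1 ∧ ‖ζ - z‖ < M * (1 - ‖z‖)}

/-- Angular (nontangential) limit of `h` at `ζ` equals `L`: within every Stolz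
angle `S(ζ, M)`, `M > 1`, the function tends to `L`. -/
def AngularLimit (h : ℂ → ℂ) (ζ : ℂ) (L : ℂ) : Prop :=
  ∀ M : ℝ, 1 < M → Tendsto h (nhdsWithin ζ (StolzAngle ζ M)) (nhds L)

/-- Angular limit of `h` at `ζ` is `∞`: `|h|` tends to `+∞` within every Stolz angle. -/
def AngularLimitInfty (h : ℂ → ℂ) (ζ : ℂ) : Prop :=
  ∀ M : ℝ, 1 < M → Tendsto (fun z => ‖h z‖) (nhdsWithin ζ (StolzAngle ζ M)) atTop

open Topology ComplexConjugate

lemma mem_ball_zero_one_iff_normSq {z : ℂ} : z ∈ ball (0 : ℂ) 1 ↔ normSq z < 1 := by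
  rw [mem_ball_zero_iff, ← sq_lt_one_iff₀ (norm_nonneg z), Complex.sq_norm]

lemma normSq_one_sub_conj_mul_sub_normSq_sub (w z : ℂ) :
    normSq (1 - conj w * z) - normSq (z - w) = (1 - normSq w) * (1 - normSq z) := by
  simp only [normSq_apply, sub_re, sub_im, mul_re, mul_im, conj_re, conj_im, one_re, one_im]
  ring

lemma normSq_add_conj_sub_normSq_sub (u v : ℂ) :
    normSq (u + conj v) - normSq (u - v) = 4 * u.re * v.re := by
  simp only [normSq_apply, add_re, add_im, sub_re, sub_im, conj_re, conj_im]
  ring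

lemma normSq_sub_lt_normSq_one_sub_conj_mul {w z : ℂ} (hw : w ∈ ball (0 : ℂ) 1)
    (hz : z ∈ ball (0 : ℂ) 1) : normSq (z - w) < normSq (1 - conj w * z) := by
  rw [mem_ball_zero_one_iff_normSq] at hw hz
  nlinarith [normSq_one_sub_conj_mul_sub_normSq_sub w z]

lemma one_sub_conj_mul_ne_zero {w z : ℂ} (hw : w ∈ ball (0 : ℂ) 1) (hz : z ∈ ball (0 : ℂ) 1) :
    1 - conj w * z ≠ 0 :=
  normSq_pos.1 ((normSq_nonneg _).trans_lt (normSq_sub_lt_normSq_one_sub_conj_mul hw hz))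

lemma sub_div_one_sub_conj_mul_mem_ball {w z : ℂ} (hw : w ∈ ball (0 : ℂ) 1)
    (hz : z ∈ ball (0 : ℂ) 1) : (z - w) / (1 - conj w * z) ∈ ball (0 : ℂ) 1 := by
  rw [mem_ball_zero_one_iff_normSq, normSq_div,
    div_lt_one (normSq_pos.2 (one_sub_conj_mul_ne_zero hw hz))]
  exact normSq_sub_lt_normSq_one_sub_conj_mul hw hz

lemma add_conj_ne_zero {u v : ℂ} (hu : 0 < u.re) (hv : 0 < v.re) : u + conj v ≠ 0 := by
  intro h
  have := congrArg re h
  simp only [add_re, conj_re, zero_re] at this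
  linarith

lemma sub_div_add_conj_mem_ball {u v : ℂ} (hu : 0 < u.re) (hv : 0 < v.re) :
    (u - v) / (u + conj v) ∈ ball (0 : ℂ) 1 := by
  have hlt : normSq (u - v) < normSq (u + conj v) := by
    nlinarith [normSq_add_conj_sub_normSq_sub u v, mul_pos hu hv]
  rw [mem_ball_zero_one_iff_normSq, normSq_div,
    div_lt_one ((normSq_nonneg _).trans_lt hlt)]
  exact hlt

theorem schwarzPick_rightHalfPlane {P : ℂ → ℂ} (hd : DifferentiableOn ℂ P (ball 0 1))
    (hre : ∀ z ∈ ball (0 : ℂ) 1, 0 < (P z).re) {w z : ℂ} (hw : w ∈ ball (0 : ℂ) 1)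
    (hz : z ∈ ball (0 : ℂ) 1) :
    (1 - normSq w) * (1 - normSq z) * normSq (P z + conj (P w)) ≤
      4 * (P z).re * (P w).re * normSq (1 - conj w * z) := by
  have hw' : -w ∈ ball (0 : ℂ) 1 := by simpa using hw
  set φ : ℂ → ℂ := fun x => (x - -w) / (1 - conj (-w) * x)
  set C : ℂ → ℂ := fun u => (u - P w) / (u + conj (P w))
  have hφ : Set.MapsTo φ (ball 0 1) (ball 0 1) := fun x hx =>
    sub_div_one_sub_conj_mul_mem_ball hw' hx
  have hφd : DifferentiableOn ℂ φ (ball 0 1) :=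
    DifferentiableOn.div (by fun_prop) (by fun_prop) fun x hx => one_sub_conj_mul_ne_zero hw' hx
  have hPφ : Set.MapsTo (P ∘ φ) (ball 0 1) {u | 0 < u.re} := fun x hx => hre _ (hφ hx)
  have hCd : DifferentiableOn ℂ C {u | 0 < u.re} :=
    DifferentiableOn.div (by fun_prop) (by fun_prop) fun u hu => add_conj_ne_zero hu (hre w hw)
  have hCφ : Set.MapsTo (C ∘ P ∘ φ) (ball 0 1) (ball 0 1) := fun x hx =>
    sub_div_add_conj_mem_ball (hPφ hx) (hre w hw)
  have hφ0 : φ 0 = w := by simp [φ]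
  set x := (z - w) / (1 - conj w * z)
  have hx : x ∈ ball (0 : ℂ) 1 := sub_div_one_sub_conj_mul_mem_ball hw hz
  have hφx : φ x = z := by
    have hx_mul : x * (1 - conj w * z) = z - w := div_mul_cancel₀ _ (one_sub_conj_mul_ne_zero hw hz)
    rw [div_eq_iff (one_sub_conj_mul_ne_zero hw' hx), map_neg]
    linear_combination hx_mul
  have hschwarz := Complex.norm_le_norm_of_mapsTo_ball (hCd.comp (hd.comp hφd hφ) hPφ)
    (hCφ.mono_right ball_subset_closedBall) (by simp [C, hφ0])
    (mem_ball_zero_iff.1 hx)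
  simp only [Function.comp_apply, hφx, C, x, norm_div] at hschwarz
  rw [div_le_div_iff₀ (norm_pos_iff.2 (add_conj_ne_zero (hre z hz) (hre w hw)))
    (norm_pos_iff.2 (one_sub_conj_mul_ne_zero hw hz))] at hschwarz
  have hsq := pow_le_pow_left₀ (by positivity) hschwarz 2
  simp only [mul_pow, Complex.sq_norm] at hsq
  linear_combination hsq - normSq (P z + conj (P w)) * normSq_one_sub_conj_mul_sub_normSq_sub w z
    + normSq (1 - conj w * z) * normSq_add_conj_sub_normSq_sub (P z) (P w)

theorem eqOn_of_re_nonneg_of_re_eq_zero {U : Set ℂ} {g : ℂ → ℂ} {z₀ : ℂ} (hU : IsOpen U)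
    (hU' : IsPreconnected U) (hd : DifferentiableOn ℂ g U) (hre : ∀ z ∈ U, 0 ≤ (g z).re)
    (hz₀ : z₀ ∈ U) (h0 : (g z₀).re = 0) : ∀ z ∈ U, g z = g z₀ := by
  rcases (hd.analyticOnNhd hU).is_constant_or_isOpen hU' with ⟨c, hc⟩ | hopen
  · intro z hz
    rw [hc z hz, hc z₀ hz₀]
  · -- an open set around `g z₀` contains points of negative real part
    obtain ⟨ε, hε, hball⟩ := Metric.isOpen_iff.1 (hopen U subset_rfl hU) (g z₀) ⟨z₀, hz₀, rfl⟩
    obtain ⟨z, hz, hgz⟩ := hball (show g z₀ - (ε / 2 : ℝ) ∈ ball (g z₀) ε by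
      rw [mem_ball, dist_eq_norm, sub_sub_cancel_left, norm_neg, norm_real, Real.norm_eq_abs,
        abs_of_pos (half_pos hε)]
      exact half_lt_self hε)
    have := hre z hz
    rw [hgz, sub_re, h0, ofReal_re] at this
    linarith

lemma re_inv_nonneg {z : ℂ} (hz : 0 ≤ z.re) : 0 ≤ z⁻¹.re := by
  rw [inv_re]
  exact div_nonneg hz (normSq_nonneg z)

theorem exists_eq_div_of_re_nonneg {U : Set ℂ} {Q : ℂ → ℂ} (hU : IsOpen U) (hU' : IsPreconnected U)
    (hd : DifferentiableOn ℂ Q U) (hre : ∀ z ∈ U, 0 ≤ (Q z).re) :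
    ∃ r : ℝ, 0 ≤ r ∧ ∃ q : ℂ → ℂ, DifferentiableOn ℂ q U ∧ (∀ z ∈ U, 0 ≤ (q z).re) ∧
      ∀ z ∈ U, Q z = r / q z := by
  by_cases hzero : ∃ z₀ ∈ U, Q z₀ = 0
  · obtain ⟨z₀, hz₀, hQz₀⟩ := hzero
    have hQ := eqOn_of_re_nonneg_of_re_eq_zero hU hU' hd hre hz₀ (by simp [hQz₀])
    exact ⟨0, le_rfl, fun _ => 1, differentiableOn_const 1, fun _ _ => zero_le_one,
      fun z hz => by simp [hQ z hz, hQz₀]⟩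
  · push Not at hzero
    exact ⟨1, zero_le_one, fun z => (Q z)⁻¹, hd.inv hzero, fun z hz => re_inv_nonneg (hre z hz),
      fun z _ => by simp⟩

def herglotzKernel (ζ z : ℂ) : ℂ := (ζ + z) / (ζ - z)

lemma sub_ne_zero_of_norm_eq_one {ζ z : ℂ} (hζ : ‖ζ‖ = 1) (hz : z ∈ ball (0 : ℂ) 1) :
    ζ - z ≠ 0 := by
  rw [sub_ne_zero]
  rintro rfl
  simp [hζ] at hz

lemma re_herglotzKernel {ζ : ℂ} (hζ : ‖ζ‖ = 1) (z : ℂ) :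
    (herglotzKernel ζ z).re = (1 - normSq z) / normSq (ζ - z) := by
  have hζ' : ζ.re * ζ.re + ζ.im * ζ.im = 1 := by
    rw [← normSq_apply, ← Complex.sq_norm, hζ, one_pow]
  rw [herglotzKernel, div_re, ← add_div]
  congr 1
  simp only [normSq_apply, add_re, add_im, sub_re, sub_im]
  linear_combination hζ'

lemma differentiableOn_herglotzKernel {ζ : ℂ} (hζ : ‖ζ‖ = 1) :
    DifferentiableOn ℂ (herglotzKernel ζ) (ball 0 1) :=
  DifferentiableOn.div (by fun_prop) (by fun_prop) fun _ hz => sub_ne_zero_of_norm_eq_one hζ hz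

lemma differentiableOn_sum_herglotzKernel {ι : Type*} {s : Finset ι} {ζ : ι → ℂ} {σ : ι → ℝ}
    (hζ : ∀ i ∈ s, ‖ζ i‖ = 1) :
    DifferentiableOn ℂ (fun z => ∑ i ∈ s, σ i * herglotzKernel (ζ i) z) (ball 0 1) :=
  DifferentiableOn.fun_sum fun i hi => (differentiableOn_herglotzKernel (hζ i hi)).const_mul _

lemma tendsto_ofReal_nhdsLT_one : Tendsto (fun r : ℝ => (r : ℂ)) (𝓝[<] 1) (𝓝 1) := by
  simpa using (continuous_ofReal.tendsto 1).mono_left nhdsWithin_le_nhds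

lemma tendsto_ofReal_mul_nhdsLT_one (ζ : ℂ) :
    Tendsto (fun r : ℝ => r * ζ) (𝓝[<] 1) (𝓝 ζ) := by
  simpa using tendsto_ofReal_nhdsLT_one.mul_const ζ

lemma tendsto_one_sub_mul_herglotzKernel_of_ne {ζ ζ' : ℂ} (h : ζ' ≠ ζ) :
    Tendsto (fun r : ℝ => (1 - r) * herglotzKernel ζ' (r * ζ)) (𝓝[<] 1) (𝓝 0) := by
  have hK : ContinuousAt (herglotzKernel ζ') ζ :=
    (continuousAt_const.add continuousAt_id).div (continuousAt_const.sub continuousAt_id)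
      (sub_ne_zero.2 h)
  simpa using ((tendsto_const_nhds (x := (1 : ℂ))).sub tendsto_ofReal_nhdsLT_one).mul
    (hK.tendsto.comp (tendsto_ofReal_mul_nhdsLT_one ζ))

lemma ofReal_mul_mem_ball {ζ : ℂ} (hζ : ‖ζ‖ = 1) {r : ℝ} (hr : r ∈ Set.Ioo (0 : ℝ) 1) :
    (r : ℂ) * ζ ∈ ball (0 : ℂ) 1 := by
  rw [mem_ball_zero_iff, norm_mul, hζ, mul_one, norm_real, Real.norm_eq_abs, abs_of_pos hr.1]
  exact hr.2

lemma normSq_one_sub_conj_mul {ζ : ℂ} (hζ : ‖ζ‖ = 1) (z : ℂ) :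
    normSq (1 - conj ζ * z) = normSq (ζ - z) := by
  have hζζ : conj ζ * ζ = 1 := by
    rw [mul_comm, mul_conj, ← Complex.sq_norm, hζ]; norm_num
  rw [show 1 - conj ζ * z = conj ζ * (ζ - z) by linear_combination -hζζ, normSq_mul, normSq_conj,
    ← Complex.sq_norm, hζ, one_pow, one_mul]

lemma re_pos_of_tendsto_one_sub_mul {P : ℂ → ℂ} (hd : DifferentiableOn ℂ P (ball 0 1))
    (hre : ∀ z ∈ ball (0 : ℂ) 1, 0 ≤ (P z).re) {ζ L : ℂ} (hζ : ‖ζ‖ = 1) (hL : L ≠ 0)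
    (hlim : Tendsto (fun r : ℝ => (1 - r) * P (r * ζ)) (𝓝[<] 1) (𝓝 L)) :
    ∀ z ∈ ball (0 : ℂ) 1, 0 < (P z).re := by
  intro z hz
  refine (hre z hz).lt_of_ne fun h => hL ?_
  have hconst := eqOn_of_re_nonneg_of_re_eq_zero isOpen_ball
    (convex_ball (0 : ℂ) 1).isPreconnected hd hre hz h.symm
  have hlim₀ := ((tendsto_const_nhds (x := (1 : ℂ))).sub tendsto_ofReal_nhdsLT_one).mul_const (P z)
  rw [sub_self, zero_mul] at hlim₀
  refine tendsto_nhds_unique hlim (hlim₀.congr' ?_)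
  filter_upwards [Ioo_mem_nhdsLT one_pos] with r hr
  rw [hconst _ (ofReal_mul_mem_ball hζ hr)]

theorem julia_rightHalfPlane {P : ℂ → ℂ} (hd : DifferentiableOn ℂ P (ball 0 1))
    (hre : ∀ z ∈ ball (0 : ℂ) 1, 0 ≤ (P z).re) {ζ : ℂ} (hζ : ‖ζ‖ = 1) {σ : ℝ} (hσ : 0 < σ)
    (hlim : Tendsto (fun r : ℝ => (1 - r) * P (r * ζ)) (𝓝[<] 1) (𝓝 (2 * σ)))
    {z : ℂ} (hz : z ∈ ball (0 : ℂ) 1) : σ * (herglotzKernel ζ z).re ≤ (P z).re := by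
  have hpos := re_pos_of_tendsto_one_sub_mul hd hre hζ
    (mul_ne_zero two_ne_zero (ofReal_ne_zero.2 hσ.ne')) hlim
  set u : ℝ → ℂ := fun r => (1 - r) * P (r * ζ)
  -- Schwarz–Pick at `w = r ζ`, multiplied by `1 - r`
  have hineq : ∀ᶠ r in 𝓝[<] (1 : ℝ),
      (1 + r) * (1 - normSq z) * normSq ((1 - r) * P z + conj (u r)) ≤
        4 * (P z).re * (u r).re * normSq (1 - r * conj ζ * z) := by
    filter_upwards [Ioo_mem_nhdsLT one_pos] with r hr
    have hsp := schwarzPick_rightHalfPlane hd hpos (ofReal_mul_mem_ball hζ hr) hz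
    have hw : normSq ((r : ℂ) * ζ) = r ^ 2 := by
      rw [normSq_mul, normSq_ofReal, ← Complex.sq_norm, hζ]; ring
    rw [hw, map_mul, conj_ofReal] at hsp
    have hsum : (1 - r) * P z + conj (u r) = ((1 - r : ℝ) : ℂ) * (P z + conj (P (r * ζ))) := by
      simp only [u, map_mul, map_sub, map_one, conj_ofReal]
      push_cast
      ring
    have hure : (u r).re = (1 - r) * (P (r * ζ)).re := by
      simp [u]
    rw [hsum, hure, normSq_mul, normSq_ofReal]
    have h1r : 0 ≤ 1 - r := sub_nonneg.2 hr.2.le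
    linear_combination (1 - r) * hsp
  have hF : Continuous fun q : ℝ × ℂ =>
      (1 + q.1) * (1 - normSq z) * normSq ((1 - q.1) * P z + conj q.2) := by fun_prop
  have hG : Continuous fun q : ℝ × ℂ =>
      4 * (P z).re * q.2.re * normSq (1 - q.1 * conj ζ * z) := by fun_prop
  have hq : Tendsto (fun r : ℝ => (r, u r)) (𝓝[<] 1) (𝓝 (1, 2 * σ)) :=
    (tendsto_id.mono_left nhdsWithin_le_nhds).prodMk_nhds hlim
  have hlimit := le_of_tendsto_of_tendsto ((hF.tendsto _).comp hq) ((hG.tendsto _).comp hq) hineq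
  simp only [ofReal_one, sub_self, zero_mul, map_mul, conj_ofReal, zero_add, normSq_conj,
    normSq_ofNat, normSq_ofReal, mul_re, re_ofNat, ofReal_re, im_ofNat, ofReal_im, mul_zero,
    sub_zero, one_mul] at hlimit
  -- `hlimit : 8 σ² (1 - |z|²) ≤ 8 σ Re (P z) |1 - conj ζ z|²`
  rw [normSq_one_sub_conj_mul hζ] at hlimit
  rw [re_herglotzKernel hζ, mul_div_assoc',
    div_le_iff₀ (normSq_pos.2 (sub_ne_zero_of_norm_eq_one hζ hz))]
  nlinarith

lemma tendsto_ofReal_mul_nhdsWithin_stolzAngle {ζ : ℂ} (hζ : ‖ζ‖ = 1) :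
    Tendsto (fun r : ℝ => (r : ℂ) * ζ) (𝓝[<] 1) (𝓝[StolzAngle ζ 2] ζ) := by
  refine tendsto_nhdsWithin_iff.2 ⟨tendsto_ofReal_mul_nhdsLT_one ζ, ?_⟩
  filter_upwards [Ioo_mem_nhdsLT one_pos] with r hr
  have hnorm : ‖(r : ℂ) * ζ‖ = r := by
    rw [norm_mul, hζ, mul_one, norm_real, Real.norm_eq_abs, abs_of_pos hr.1]
  have hdist : ‖ζ - r * ζ‖ = 1 - r := by
    rw [show ζ - r * ζ = ((1 - r : ℝ) : ℂ) * ζ by push_cast; ring, norm_mul, hζ, mul_one, norm_real,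
      Real.norm_eq_abs, abs_of_pos (sub_pos.2 hr.2)]
  refine ⟨hnorm.trans_lt hr.2, ?_⟩
  rw [hnorm, hdist]
  linarith [hr.2]

lemma AngularLimit.tendsto_radial {h : ℂ → ℂ} {ζ L : ℂ} (hL : AngularLimit h ζ L) (hζ : ‖ζ‖ = 1) :
    Tendsto (fun r : ℝ => h (r * ζ)) (𝓝[<] 1) (𝓝 L) :=
  (hL 2 one_lt_two).comp (tendsto_ofReal_mul_nhdsWithin_stolzAngle hζ)

lemma sub_mul_one_sub_conj_mul_self {ζ : ℂ} (hζ : ‖ζ‖ = 1) (a : ℂ) :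
    (ζ - a) * (1 - conj a * ζ) = ζ * normSq (ζ - a) := by
  have hζζ : ζ * conj ζ = 1 := by
    rw [mul_conj, ← Complex.sq_norm, hζ]; norm_num
  rw [← mul_conj, map_sub]
  linear_combination (a - ζ) * hζζ

theorem tendsto_one_sub_mul_inv_of_angularLimit {a ζ : ℂ} {p f : ℂ → ℂ} {m : ℝ}
    (hf : ∀ z, f z = (z - a) * (1 - conj a * z) * p z) (hζ : ‖ζ‖ = 1) (hm : m ≠ 0)
    (hder : AngularLimit (fun z => f z / (z - ζ)) ζ m) :
    Tendsto (fun r : ℝ => (1 - r) * (p (r * ζ))⁻¹) (𝓝[<] 1) (𝓝 (-normSq (ζ - a) / m)) := by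
  have hζ0 : ζ ≠ 0 := by rintro rfl; simp at hζ
  have hmC : (m : ℂ) ≠ 0 := ofReal_ne_zero.2 hm
  have hc : Tendsto (fun r : ℝ => (r * ζ - a) * (1 - conj a * (r * ζ))) (𝓝[<] 1)
      (𝓝 (ζ * normSq (ζ - a))) := by
    rw [← sub_mul_one_sub_conj_mul_self hζ]
    exact ((by fun_prop : Continuous fun z : ℂ => (z - a) * (1 - conj a * z)).tendsto ζ).comp
      (tendsto_ofReal_mul_nhdsLT_one ζ)
  have hq := hder.tendsto_radial hζ
  have hlim := hc.neg.div (hq.const_mul ζ) (mul_ne_zero hζ0 hmC)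
  rw [show -(ζ * normSq (ζ - a)) / (ζ * m) = -normSq (ζ - a) / m by field_simp] at hlim
  refine hlim.congr' ?_
  filter_upwards [Ioo_mem_nhdsLT one_pos, hq.eventually_ne hmC] with r hr hfr
  rw [hf, div_ne_zero_iff, mul_ne_zero_iff] at hfr
  obtain ⟨⟨hc, hp⟩, hd⟩ := hfr
  simp only [Pi.div_apply, hf]
  generalize (r * ζ - a) * (1 - conj a * (r * ζ)) = c at hc ⊢
  field_simp
  ring

theorem re_sub_sum_herglotzKernel_nonneg {ι : Type*} {s : Finset ι} {ζ : ι → ℂ} {σ : ι → ℝ}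
    {P : ℂ → ℂ} (hd : DifferentiableOn ℂ P (ball 0 1)) (hre : ∀ z ∈ ball (0 : ℂ) 1, 0 ≤ (P z).re)
    (hζ : ∀ i ∈ s, ‖ζ i‖ = 1) (hinj : Set.InjOn ζ s) (hσ : ∀ i ∈ s, 0 < σ i)
    (hlim : ∀ i ∈ s, Tendsto (fun r : ℝ => (1 - r) * P (r * ζ i)) (𝓝[<] 1) (𝓝 (2 * σ i))) :
    ∀ z ∈ ball (0 : ℂ) 1, 0 ≤ (P z - ∑ i ∈ s, σ i * herglotzKernel (ζ i) z).re := by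
  classical
  induction s using Finset.induction_on with
  | empty => simpa using hre
  | insert j s hj ih =>
    set Q : ℂ → ℂ := fun z => P z - ∑ i ∈ s, σ i * herglotzKernel (ζ i) z
    have hQre : ∀ z ∈ ball (0 : ℂ) 1, 0 ≤ (Q z).re :=
      ih (fun i hi => hζ i (mem_insert_of_mem hi)) (hinj.mono (by simp))
        (fun i hi => hσ i (mem_insert_of_mem hi)) (fun i hi => hlim i (mem_insert_of_mem hi))
    have hQd : DifferentiableOn ℂ Q (ball 0 1) :=
      hd.sub (differentiableOn_sum_herglotzKernel fun i hi => hζ i (mem_insert_of_mem hi))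
    have hne : ∀ i ∈ s, ζ i ≠ ζ j := fun i hi h =>
      hj (hinj (mem_insert_of_mem hi) (mem_insert_self j s) h ▸ hi)
    have hQlim : Tendsto (fun r : ℝ => (1 - r) * Q (r * ζ j)) (𝓝[<] 1) (𝓝 (2 * σ j)) := by
      have hsum : Tendsto (fun r : ℝ => ∑ i ∈ s, σ i * ((1 - r) * herglotzKernel (ζ i) (r * ζ j)))
          (𝓝[<] 1) (𝓝 0) := by
        simpa using tendsto_finsetSum s fun i hi =>
          (tendsto_one_sub_mul_herglotzKernel_of_ne (hne i hi)).const_mul (σ i : ℂ)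
      simpa [Q, mul_sub, mul_sum, mul_left_comm] using (hlim j (mem_insert_self j s)).sub hsum
    intro z hz
    have hjulia := julia_rightHalfPlane hQd hQre (hζ j (mem_insert_self j s))
      (hσ j (mem_insert_self j s)) hQlim hz
    rw [sum_insert hj, sub_add_eq_sub_sub_swap, sub_re, re_ofReal_mul]
    exact sub_nonneg.2 hjulia

theorem exists_inv_eq_sum_herglotzKernel_add {ι : Type*} {s : Finset ι} {ζ : ι → ℂ} {σ : ι → ℝ}
    {p : ℂ → ℂ} (hp : DifferentiableOn ℂ p (ball 0 1)) (hre : ∀ z ∈ ball (0 : ℂ) 1, 0 ≤ (p z).re)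
    (hζ : ∀ i ∈ s, ‖ζ i‖ = 1) (hinj : Set.InjOn ζ s) (hσ : ∀ i ∈ s, 0 < σ i)
    (hlim : ∀ i ∈ s, Tendsto (fun r : ℝ => (1 - r) * (p (r * ζ i))⁻¹) (𝓝[<] 1) (𝓝 (2 * σ i))) :
    ∃ Q : ℂ → ℂ, DifferentiableOn ℂ Q (ball 0 1) ∧ (∀ z ∈ ball (0 : ℂ) 1, 0 ≤ (Q z).re) ∧
      ∀ z ∈ ball (0 : ℂ) 1, p z ≠ 0 →
        (p z)⁻¹ = ∑ i ∈ s, σ i * herglotzKernel (ζ i) z + Q z := by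
  by_cases hzero : ∃ z₀ ∈ ball (0 : ℂ) 1, p z₀ = 0
  · obtain ⟨z₀, hz₀, hpz₀⟩ := hzero
    have hp₀ := eqOn_of_re_nonneg_of_re_eq_zero isOpen_ball
      (convex_ball (0 : ℂ) 1).isPreconnected hp hre hz₀ (by simp [hpz₀])
    exact ⟨0, differentiableOn_const 0, fun _ _ => le_rfl,
      fun z hz hpz => absurd ((hp₀ z hz).trans hpz₀) hpz⟩
  · push Not at hzero
    exact ⟨fun z => (p z)⁻¹ - ∑ i ∈ s, σ i * herglotzKernel (ζ i) z,
      (hp.inv hzero).sub (differentiableOn_sum_herglotzKernel hζ),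
      re_sub_sum_herglotzKernel_nonneg (hp.inv hzero) (fun z hz => re_inv_nonneg (hre z hz))
        hζ hinj hσ hlim,
      fun z _ _ => by ring⟩

lemma sub_div_mul_add_eq_inv_mul_herglotzKernel (ζ z : ℂ) (σ : ℝ) :
    (ζ - z) / (σ * (ζ + z)) = (σ * herglotzKernel ζ z)⁻¹ := by
  rw [herglotzKernel, ← mul_div_assoc, inv_div]

theorem bijOn_sub_div_mul_add {ζ : ℂ} (hζ : ‖ζ‖ = 1) {σ : ℝ} (hσ : 0 < σ) :
    Set.BijOn (fun z => (ζ - z) / (σ * (ζ + z))) (ball 0 1) {w : ℂ | 0 < w.re} := by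
  have hζ0 : ζ ≠ 0 := by rintro rfl; simp at hζ
  have hσC : (σ : ℂ) ≠ 0 := ofReal_ne_zero.2 hσ.ne'
  have hadd : ∀ z ∈ ball (0 : ℂ) 1, ζ + z ≠ 0 := fun z hz => by
    simpa using sub_ne_zero_of_norm_eq_one hζ (show -z ∈ ball (0 : ℂ) 1 by simpa using hz)
  have hden : ∀ w : ℂ, 0 < w.re → 1 + σ * w ≠ 0 := fun w hw h => by
    have := congrArg re h
    simp only [add_re, one_re, re_ofReal_mul, zero_re] at this
    nlinarith
  refine Set.InvOn.bijOn (f' := fun w => ζ * (1 - σ * w) / (1 + σ * w)) ⟨fun z hz => ?_,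
    fun w hw => ?_⟩ (fun z hz => ?_) (fun w hw => ?_)
  · field_simp [hadd z hz, hσC, hζ0]
    ring
  · field_simp [hden w hw, hσC, hζ0]
    ring
  · have hK : 0 < (σ * herglotzKernel ζ z).re := by
      rw [re_ofReal_mul, re_herglotzKernel hζ]
      have := mem_ball_zero_one_iff_normSq.1 hz
      have := normSq_pos.2 (sub_ne_zero_of_norm_eq_one hζ hz)
      positivity
    show 0 < ((ζ - z) / (σ * (ζ + z))).re
    rw [sub_div_mul_add_eq_inv_mul_herglotzKernel, inv_re]
    exact div_pos hK (normSq_pos.2 fun h => by simp [h] at hK)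
  · have hw' : 0 < w.re := hw
    have hkey : normSq (1 + σ * w) - normSq (1 - σ * w) = 4 * σ * w.re := by
      simp only [normSq_apply, add_re, add_im, sub_re, sub_im, re_ofReal_mul, im_ofReal_mul,
        one_re, one_im]
      ring
    rw [mem_ball_zero_one_iff_normSq, normSq_div, normSq_mul, ← Complex.sq_norm ζ, hζ, one_pow,
      one_mul, div_lt_one (normSq_pos.2 (hden w hw'))]
    nlinarith

theorem stmt6_general (N : ℕ) (a : ℂ)
    (p f : ℂ → ℂ)
    (hp : DifferentiableOn ℂ p (ball (0:ℂ) 1))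
    (hre : ∀ z ∈ ball (0:ℂ) 1, 0 ≤ (p z).re)
    (hf : ∀ z, f z = (z - a) * (1 - (starRingEnd ℂ) a * z) * p z)
    (ζ : Fin N → ℂ) (hinj : Function.Injective ζ)
    (hζ : ∀ n, ‖ζ n‖ = 1) (hζa : ∀ n, ζ n ≠ a)
    (m : Fin N → ℝ) (hm : ∀ n, m n < 0)
    (hder : ∀ n, AngularLimit (fun z => f z / (z - ζ n)) (ζ n) ((m n : ℝ) : ℂ)) :
    ∃ (r : ℝ) (R : Fin N → ℂ → ℂ) (q : ℂ → ℂ), 0 ≤ r ∧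
      (∀ n, ∃ α β γ δ : ℂ, α * δ - β * γ ≠ 0 ∧ γ * ζ n + δ ≠ 0 ∧
        (∀ z, R n z = (α * z + β) / (γ * z + δ)) ∧ R n (ζ n) = 0) ∧
      (∀ n, Set.BijOn (R n) (ball (0:ℂ) 1) {w : ℂ | 0 < w.re}) ∧
      DifferentiableOn ℂ q (ball (0:ℂ) 1) ∧
      (∀ z ∈ ball (0:ℂ) 1, 0 ≤ (q z).re) ∧
      ∀ z ∈ ball (0:ℂ) 1, f z ≠ 0 →
        (∀ n, (z - a) * (1 - (starRingEnd ℂ) a * z) * R n z ≠ 0) →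
        (z - a) * (1 - (starRingEnd ℂ) a * z) * q z ≠ 0 →
        1 / f z =
          (∑ n, 1 / ((z - a) * (1 - (starRingEnd ℂ) a * z) * R n z))
            + (r : ℂ) / ((z - a) * (1 - (starRingEnd ℂ) a * z) * q z) := by
  set σ : Fin N → ℝ := fun n => -normSq (ζ n - a) / (2 * m n)
  have hσ n : 0 < σ n :=
    div_pos_of_neg_of_neg (neg_neg_of_pos (normSq_pos.2 (sub_ne_zero.2 (hζa n))))
      (by linarith [hm n])
  have hlim n : Tendsto (fun r : ℝ => (1 - r) * (p (r * ζ n))⁻¹) (𝓝[<] 1) (𝓝 (2 * σ n)) := by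
    convert tendsto_one_sub_mul_inv_of_angularLimit hf (hζ n) (hm n).ne (hder n) using 2
    simp only [σ]
    push_cast
    field_simp
  obtain ⟨Q, hQd, hQre, hQ⟩ := exists_inv_eq_sum_herglotzKernel_add hp hre (fun n _ => hζ n)
    hinj.injOn (fun n _ => hσ n) (fun n _ => hlim n)
  obtain ⟨r, hr, q, hqd, hqre, hQq⟩ :=
    exists_eq_div_of_re_nonneg isOpen_ball (convex_ball (0 : ℂ) 1).isPreconnected hQd hQre
  have hζ0 n : ζ n ≠ 0 := by rintro h; simpa [h] using hζ n
  have hσ0 n : (σ n : ℂ) ≠ 0 := ofReal_ne_zero.2 (hσ n).ne'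
  refine ⟨r, fun n z => (ζ n - z) / (σ n * (ζ n + z)), q, hr,
    fun n => ⟨-1, ζ n, σ n, σ n * ζ n, ?_, ?_, fun z => by ring, by simp⟩,
    fun n => bijOn_sub_div_mul_add (hζ n) (hσ n), hqd, hqre, fun z hz hfz _ _ => ?_⟩
  · ring_nf
    simp [hσ0 n, hζ0 n]
  · ring_nf
    simp [hσ0 n, hζ0 n]
  · have hpz := hQ z hz (right_ne_zero_of_mul (hf z ▸ hfz))
    rw [hQq z hz] at hpz
    rw [hf]
    generalize (z - a) * (1 - conj a * z) = c
    simp only [sub_div_mul_add_eq_inv_mul_herglotzKernel, one_div, mul_inv, inv_inv, hpz, ← mul_sum]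
    ring

/-- Theorem `t.general`: separation of boundary singularities for
a generator with arbitrary Denjoy–Wolff point `a` in the closed disk. -/
theorem stmt6 (N : ℕ) (a : ℂ) (ha : ‖a‖ ≤ 1)
    (p f : ℂ → ℂ)
    (hp : DifferentiableOn ℂ p (ball (0:ℂ) 1))
    (hre : ∀ z ∈ ball (0:ℂ) 1, 0 ≤ (p z).re)
    (hf : ∀ z, f z = (z - a) * (1 - (starRingEnd ℂ) a * z) * p z)
    (ζ : Fin N → ℂ) (hinj : Function.Injective ζ)
    (hζ : ∀ n, ‖ζ n‖ = 1) (hζa : ∀ n, ζ n ≠ a)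
    (m : Fin N → ℝ) (hm : ∀ n, m n < 0)
    (hder : ∀ n, AngularLimit (fun z => f z / (z - ζ n)) (ζ n) ((m n : ℝ) : ℂ)) :
    ∃ (r : ℝ) (R : Fin N → ℂ → ℂ) (q : ℂ → ℂ), 0 ≤ r ∧
      (∀ n, ∃ α β γ δ : ℂ, α * δ - β * γ ≠ 0 ∧ γ * ζ n + δ ≠ 0 ∧
        (∀ z, R n z = (α * z + β) / (γ * z + δ)) ∧ R n (ζ n) = 0) ∧
      (∀ n, Set.BijOn (R n) (ball (0:ℂ) 1) {w : ℂ | 0 < w.re}) ∧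
      DifferentiableOn ℂ q (ball (0:ℂ) 1) ∧
      (∀ z ∈ ball (0:ℂ) 1, 0 ≤ (q z).re) ∧
      ∀ z ∈ ball (0:ℂ) 1, f z ≠ 0 →
        (∀ n, (z - a) * (1 - (starRingEnd ℂ) a * z) * R n z ≠ 0) →
        (z - a) * (1 - (starRingEnd ℂ) a * z) * q z ≠ 0 →
        1 / f z =
          (∑ n, 1 / ((z - a) * (1 - (starRingEnd ℂ) a * z) * R n z))
            + (r : ℂ) / ((z - a) * (1 - (starRingEnd ℂ) a * z) * q z) :=
  stmt6_general N a p f hp hre hf ζ hinj hζ hζa m hm hder
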